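/- arXiv:2009.06222 — 6 statements merged into one kernel-verified Lean document; each statement's English description precedes it below -/
import Mathlib

section
/- Let ω > 0, ρ > 0. Suppose (x*, λ*) is a fixed point of the MALM dual update, i.e., λ* = λ* − (c(x*) + ω·λ*)/(ω+ρ), and x* is a stationary point of Ψ(x) = f(x) − (λ*)ᵀc(x) + (1/(2(ω+ρ)))‖c(x) + ω·λ*‖². Then c(x*) + ω·λ* = 0 and ∇f(x*) − Dc(x*)ᵀλ* = 0; in particular x* is a stationary point of the quadratic penalty function Φ_ω(x) = f(x) + (1/(2ω))‖c(x)‖². -/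
open RealInnerProductSpace

theorem malm_fixed_point_is_penalty_stationary
    (n m : ℕ) (f : EuclideanSpace ℝ (Fin n) → ℝ)
    (c : EuclideanSpace ℝ (Fin n) → EuclideanSpace ℝ (Fin m))
    (hf : Differentiable ℝ f) (hc : Differentiable ℝ c)
    (ω ρ : ℝ) (hω : 0 < ω) (hρ : 0 < ρ)
    (xstar : EuclideanSpace ℝ (Fin n)) (lamstar : EuclideanSpace ℝ (Fin m))
    (Ψ : EuclideanSpace ℝ (Fin n) → ℝ)
    (hΨ : ∀ x, Ψ x = f x - ⟪lamstar, c x⟫ + (1 / (2 * (ω + ρ))) * ‖c x + ω • lamstar‖ ^ 2)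
    (Φ : EuclideanSpace ℝ (Fin n) → ℝ)
    (hΦ : ∀ x, Φ x = f x + (1 / (2 * ω)) * ‖c x‖ ^ 2)
    (hfix : lamstar = lamstar - ((ω + ρ)⁻¹) • (c xstar + ω • lamstar))
    (hstat : fderiv ℝ Ψ xstar = 0) :
    c xstar + ω • lamstar = 0 ∧
    (∀ v, fderiv ℝ f xstar v = ⟪lamstar, fderiv ℝ c xstar v⟫) ∧
    fderiv ℝ Φ xstar = 0 := by
  have hωρ : ω + ρ ≠ 0 := by positivity
  have key : c xstar + ω • lamstar = 0 := by
    have h0 : ((ω + ρ)⁻¹) • (c xstar + ω • lamstar) = 0 := sub_eq_self.mp hfix.symm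
    rcases smul_eq_zero.mp h0 with h | h
    · exact absurd h (inv_ne_zero hωρ)
    · exact h
  have hcx : c xstar = -(ω • lamstar) :=
    (neg_eq_of_add_eq_zero_left key).symm
  have hF := (hf xstar).hasFDerivAt
  have hD := (hc xstar).hasFDerivAt
  set F := fderiv ℝ f xstar with hFdef
  set D := fderiv ℝ c xstar with hDdef
  have hg : HasFDerivAt (fun x => c x + ω • lamstar) D xstar := hD.add_const _
  have hlam : HasFDerivAt (fun x => ⟪lamstar, c x⟫)
      ((fderivInnerCLM ℝ (lamstar, c xstar)).comp ((0 : _ →L[ℝ] _).prod D)) xstar :=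
    (hasFDerivAt_const lamstar xstar).inner ℝ hD
  have hIn : HasFDerivAt (fun x => ⟪c x + ω • lamstar, c x + ω • lamstar⟫)
      ((fderivInnerCLM ℝ (c xstar + ω • lamstar, c xstar + ω • lamstar)).comp (D.prod D))
      xstar := hg.inner ℝ hg
  have hΨfun : Ψ = fun x => f x - ⟪lamstar, c x⟫ +
      (1 / (2 * (ω + ρ))) * ⟪c x + ω • lamstar, c x + ω • lamstar⟫ := by
    funext x; rw [hΨ, real_inner_self_eq_norm_sq]
  have hΨ' : HasFDerivAt Ψ
      (F - (fderivInnerCLM ℝ (lamstar, c xstar)).comp ((0 : _ →L[ℝ] _).prod D) +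
        (1 / (2 * (ω + ρ))) •
          ((fderivInnerCLM ℝ (c xstar + ω • lamstar, c xstar + ω • lamstar)).comp (D.prod D)))
      xstar := by
    rw [hΨfun]
    exact (hF.sub hlam).add (hIn.const_mul _)
  have hΨ0 := hΨ'.fderiv
  rw [hstat] at hΨ0
  have hmain : ∀ v, F v = ⟪lamstar, D v⟫ := by
    intro v
    have := DFunLike.congr_fun hΨ0.symm v
    simp only [key, ContinuousLinearMap.add_apply, ContinuousLinearMap.sub_apply,
      ContinuousLinearMap.smul_apply, ContinuousLinearMap.comp_apply,
      ContinuousLinearMap.prod_apply, fderivInnerCLM_apply, ContinuousLinearMap.zero_apply,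
      inner_zero_left, inner_zero_right, smul_eq_mul] at this
    linarith
  refine ⟨key, hmain, ?_⟩
  have hInc : HasFDerivAt (fun x => ⟪c x, c x⟫)
      ((fderivInnerCLM ℝ (c xstar, c xstar)).comp (D.prod D)) xstar := hD.inner ℝ hD
  have hΦfun : Φ = fun x => f x + (1 / (2 * ω)) * ⟪c x, c x⟫ := by
    funext x; rw [hΦ, real_inner_self_eq_norm_sq]
  have hΦ' : HasFDerivAt Φ
      (F + (1 / (2 * ω)) • ((fderivInnerCLM ℝ (c xstar, c xstar)).comp (D.prod D))) xstar := by
    rw [hΦfun]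
    exact hF.add (hInc.const_mul _)
  rw [hΦ'.fderiv]
  ext v
  simp only [ContinuousLinearMap.add_apply, ContinuousLinearMap.smul_apply,
    ContinuousLinearMap.comp_apply, ContinuousLinearMap.prod_apply, fderivInnerCLM_apply,
    ContinuousLinearMap.zero_apply, smul_eq_mul, hcx, inner_neg_left, inner_neg_right,
    inner_smul_left, inner_smul_right, conj_trivial, hmain v, real_inner_comm (D v) lamstar]
  field_simp
  ring
end

section
/- Let ω > 0, ρ > 0, and suppose the sequence (λ_k) in ℝᵐ satisfies λ_k = λ_{k−1} − (c_k + ω·λ_{k−1})/(ω+ρ) where c_k ∈ ℝᵐ with c_k → c̄. Then λ_k → −c̄/ω, and moreover ‖λ_k + c̄/ω‖ ≤ (ρ/(ω+ρ))ᵏ‖λ_0 + c̄/ω‖ + Σ_{j=1}^{k} (ρ/(ω+ρ))^{k−j}‖c_j − c̄‖/(ω+ρ). -/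
open Filter Topology

theorem malm_dual_convergence
    (m : ℕ) (ω ρ : ℝ) (hω : 0 < ω) (hρ : 0 < ρ)
    (lam ck : ℕ → EuclideanSpace ℝ (Fin m))
    (cbar : EuclideanSpace ℝ (Fin m))
    (hrec : ∀ k : ℕ, 1 ≤ k →
      lam k = lam (k - 1) - ((ω + ρ)⁻¹) • (ck k + ω • lam (k - 1)))
    (hconv : Tendsto ck atTop (𝓝 cbar)) :
    Tendsto lam atTop (𝓝 (-(ω⁻¹) • cbar)) ∧
    ∀ k : ℕ, ‖lam k + ω⁻¹ • cbar‖ ≤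
      (ρ / (ω + ρ)) ^ k * ‖lam 0 + ω⁻¹ • cbar‖ +
        ∑ j ∈ Finset.Icc 1 k, (ρ / (ω + ρ)) ^ (k - j) * ‖ck j - cbar‖ / (ω + ρ) := by
  have hωρ : 0 < ω + ρ := by linarith
  have hωρ' : (ω + ρ) ≠ 0 := ne_of_gt hωρ
  set r : ℝ := ρ / (ω + ρ) with hr_def
  have hr0 : 0 ≤ r := by positivity
  have hr1 : r < 1 := by rw [hr_def, div_lt_one hωρ]; linarith
  have h1r : 0 < 1 - r := by linarith
  set e : ℕ → EuclideanSpace ℝ (Fin m) := fun k => lam k + ω⁻¹ • cbar with he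
  have hrec' : ∀ k : ℕ, e (k + 1) = r • e k + (ω + ρ)⁻¹ • (cbar - ck (k + 1)) := by
    intro k
    have h := hrec (k + 1) (Nat.le_add_left 1 k)
    simp only [Nat.add_sub_cancel] at h
    simp only [he]
    rw [h]
    have hρω : ρ + ω ≠ 0 := by positivity
    match_scalars <;> field_simp <;> linear_combination (-ρ) * mul_inv_cancel₀ hωρ'
  have hstep : ∀ k : ℕ, ‖e (k + 1)‖ ≤ r * ‖e k‖ + ‖ck (k + 1) - cbar‖ / (ω + ρ) := by
    intro k
    rw [hrec' k]
    calc ‖r • e k + (ω + ρ)⁻¹ • (cbar - ck (k + 1))‖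
        ≤ ‖r • e k‖ + ‖(ω + ρ)⁻¹ • (cbar - ck (k + 1))‖ := norm_add_le _ _
      _ = r * ‖e k‖ + ‖ck (k + 1) - cbar‖ / (ω + ρ) := by
          rw [norm_smul, norm_smul, Real.norm_eq_abs, Real.norm_eq_abs,
            abs_of_nonneg hr0, abs_of_pos (inv_pos.mpr hωρ), norm_sub_rev]
          ring
  have hbound : ∀ k : ℕ, ‖e k‖ ≤ r ^ k * ‖e 0‖ +
      ∑ j ∈ Finset.Icc 1 k, r ^ (k - j) * ‖ck j - cbar‖ / (ω + ρ) := by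
    intro k
    induction k with
    | zero => simp
    | succ k ih =>
      rw [Finset.sum_Icc_succ_top (by omega : 1 ≤ k + 1)]
      have h1 : ∑ j ∈ Finset.Icc 1 k, r ^ (k + 1 - j) * ‖ck j - cbar‖ / (ω + ρ)
          = r * ∑ j ∈ Finset.Icc 1 k, r ^ (k - j) * ‖ck j - cbar‖ / (ω + ρ) := by
        rw [Finset.mul_sum]
        refine Finset.sum_congr rfl fun j hj => ?_
        have hj' : k + 1 - j = (k - j) + 1 := by
          simp only [Finset.mem_Icc] at hj; omega
        rw [hj', pow_succ]; ring
      have h2 := hstep k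
      have h3 := mul_le_mul_of_nonneg_left ih hr0
      rw [mul_add] at h3
      simp only [Nat.sub_self, pow_zero, one_mul]
      rw [h1, pow_succ]
      nlinarith
  have hiter : ∀ (N : ℕ) (δ : ℝ), 0 ≤ δ → (∀ j, N < j → ‖ck j - cbar‖ ≤ δ) →
      ∀ k, N ≤ k → ‖e k‖ ≤ r ^ (k - N) * ‖e N‖ + δ / ((ω + ρ) * (1 - r)) := by
    intro N δ hδ hd k
    induction k with
    | zero =>
      intro hk
      have : N = 0 := Nat.le_zero.mp hk
      subst this
      simp only [Nat.sub_self, pow_zero, one_mul]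
      have : 0 ≤ δ / ((ω + ρ) * (1 - r)) := by positivity
      linarith
    | succ k ih =>
      intro hk
      rcases Nat.lt_or_ge N (k + 1) with h | h
      · have hNk : N ≤ k := by omega
        have ihk := ih hNk
        have h2 := hstep k
        have h3 : ‖ck (k + 1) - cbar‖ / (ω + ρ) ≤ δ / (ω + ρ) := by
          gcongr
          exact hd (k + 1) (by omega)
        have hsub : k + 1 - N = (k - N) + 1 := by omega
        have key : r * (δ / ((ω + ρ) * (1 - r))) + δ / (ω + ρ)
            = δ / ((ω + ρ) * (1 - r)) := by
          field_simp
          ring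
        have h4 := mul_le_mul_of_nonneg_left ihk hr0
        rw [mul_add] at h4
        rw [hsub, pow_succ]
        nlinarith
      · have hN : N = k + 1 := by omega
        subst hN
        simp only [Nat.sub_self, pow_zero, one_mul]
        have : 0 ≤ δ / ((ω + ρ) * (1 - r)) := by positivity
        linarith
  have hE : Tendsto e atTop (𝓝 0) := by
    rw [tendsto_zero_iff_norm_tendsto_zero, Metric.tendsto_atTop]
    intro ε hε
    set δ : ℝ := ε * (ω + ρ) * (1 - r) / 2 with hδdef
    have hδpos : 0 < δ := by positivity
    obtain ⟨N, hN⟩ := (Metric.tendsto_atTop.mp hconv) δ hδpos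
    have hd : ∀ j, N < j → ‖ck j - cbar‖ ≤ δ := by
      intro j hj
      have := hN j (le_of_lt hj)
      rw [dist_eq_norm] at this
      linarith
    have htail : δ / ((ω + ρ) * (1 - r)) = ε / 2 := by
      rw [hδdef]; field_simp
    have hgeom : Tendsto (fun k => r ^ (k - N) * ‖e N‖) atTop (𝓝 0) := by
      have h1 : Tendsto (fun n : ℕ => r ^ n * ‖e N‖) atTop (𝓝 (0 * ‖e N‖)) :=
        (tendsto_pow_atTop_nhds_zero_of_lt_one hr0 hr1).mul_const _
      rw [zero_mul] at h1
      exact h1.comp (tendsto_sub_atTop_nat N)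
    obtain ⟨K, hK⟩ := (Metric.tendsto_atTop.mp hgeom) (ε / 2) (by positivity)
    refine ⟨max N K, fun k hk => ?_⟩
    have hk1 : N ≤ k := le_trans (le_max_left _ _) hk
    have hk2 : K ≤ k := le_trans (le_max_right _ _) hk
    have hb := hiter N δ (le_of_lt hδpos) hd k hk1
    have hg := hK k hk2
    rw [Real.dist_eq, sub_zero, abs_of_nonneg (by positivity)] at hg
    rw [Real.dist_eq, sub_zero, abs_of_nonneg (norm_nonneg _)]
    rw [htail] at hb
    linarith
  constructor
  · have h2 : Tendsto (fun k => e k - ω⁻¹ • cbar) atTop (𝓝 (0 - ω⁻¹ • cbar)) :=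
      hE.sub_const _
    simp only [he, add_sub_cancel_right, zero_sub] at h2
    rw [neg_smul]
    exact h2
  · intro k
    have := hbound k
    simp only [he] at this
    exact this
end

section
/- Let ω > 0, ρ > 0, and suppose the sequence (λ_k) in ℝᵐ satisfies λ_k = (ρ·λ_{k−1} − c_k)/(ω+ρ) with ‖c_k‖ ≤ C for all k. Then ‖λ_k‖ ≤ max(‖λ_0‖, C/ω) for all k; in particular the MALM dual iterates remain bounded whenever the constraint residuals are bounded. -/
theorem malm_dual_bounded
    (m : ℕ) (ω ρ C : ℝ) (hω : 0 < ω) (hρ : 0 < ρ) (hC : 0 ≤ C)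
    (lam ck : ℕ → EuclideanSpace ℝ (Fin m))
    (hrec : ∀ k : ℕ, 1 ≤ k →
      lam k = ((ω + ρ)⁻¹) • (ρ • lam (k - 1) - ck k))
    (hbound : ∀ k : ℕ, ‖ck k‖ ≤ C) :
    ∀ k : ℕ, ‖lam k‖ ≤ max ‖lam 0‖ (C / ω) := by
  set M := max ‖lam 0‖ (C / ω) with hM
  have hCM : C ≤ ω * M := by
    have : C / ω ≤ M := le_max_right _ _
    calc C = ω * (C / ω) := by field_simp
    _ ≤ ω * M := by nlinarith
  intro k
  induction k with
  | zero => exact le_max_left _ _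
  | succ n ih =>
    have h := hrec (n + 1) (by omega)
    simp only [Nat.add_sub_cancel] at h
    have hpos : (0:ℝ) < ω + ρ := by linarith
    have : ‖lam (n+1)‖ ≤ (ω + ρ)⁻¹ * (ρ * ‖lam n‖ + C) := by
      rw [h, norm_smul]
      have h1 : ‖ρ • lam n - ck (n+1)‖ ≤ ρ * ‖lam n‖ + C := by
        calc ‖ρ • lam n - ck (n+1)‖ ≤ ‖ρ • lam n‖ + ‖ck (n+1)‖ := norm_sub_le _ _
        _ ≤ ρ * ‖lam n‖ + C := by
            rw [norm_smul, Real.norm_eq_abs, abs_of_pos hρ]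
            exact add_le_add le_rfl (hbound _)
      have h2 : ‖(ω + ρ)⁻¹‖ = (ω + ρ)⁻¹ := by
        rw [Real.norm_eq_abs, abs_of_pos (by positivity)]
      rw [h2]
      exact mul_le_mul_of_nonneg_left h1 (by positivity)
    have hle : (ω + ρ)⁻¹ * (ρ * ‖lam n‖ + C) ≤ M := by
      rw [inv_mul_le_iff₀ hpos]
      nlinarith
    linarith
end

section
/- Let 0 < ε with ε² < 2 and x_A = (0, √(2−ε²)). If λ = (λ₁, λ₂) ∈ ℝ² satisfies the KKT stationarity condition ∇f(x_A) = Dc(x_A)ᵀλ for the circle problem, i.e., −1 = 2ε(λ₁ − λ₂) and −1 = 2√(2−ε²)(λ₁ + λ₂), then λ₁ − λ₂ = −1/(2ε), and hence ‖λ‖ ≥ 1/(4ε). In particular the Lagrange multiplier norm blows up as ε → 0⁺. -/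
theorem circle_problem_multiplier_blowup
    (ε : ℝ) (hε : 0 < ε) (hε2 : ε ^ 2 < 2)
    (lam₁ lam₂ : ℝ)
    (h1 : (-1 : ℝ) = 2 * ε * (lam₁ - lam₂))
    (h2 : (-1 : ℝ) = 2 * Real.sqrt (2 - ε ^ 2) * (lam₁ + lam₂)) :
    lam₁ - lam₂ = -1 / (2 * ε) ∧
    Real.sqrt (lam₁ ^ 2 + lam₂ ^ 2) ≥ 1 / (4 * ε) := by
  have hdiff : lam₁ - lam₂ = -1 / (2 * ε) := by
    field_simp
    linarith
  refine ⟨hdiff, ?_⟩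
  have h1' : Real.sqrt (lam₁ ^ 2 + lam₂ ^ 2) ≥ |lam₁| := by
    rw [← Real.sqrt_sq_eq_abs]
    exact Real.sqrt_le_sqrt (by nlinarith [sq_nonneg lam₂])
  have h2' : Real.sqrt (lam₁ ^ 2 + lam₂ ^ 2) ≥ |lam₂| := by
    rw [← Real.sqrt_sq_eq_abs]
    exact Real.sqrt_le_sqrt (by nlinarith [sq_nonneg lam₁])
  have habs : |lam₁ - lam₂| = 1 / (2 * ε) := by
    rw [hdiff, abs_div, abs_neg, abs_one, abs_of_pos (by linarith)]
  have := abs_sub (lam₁) (lam₂)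
  have h3 : |lam₁ - lam₂| ≤ |lam₁| + |lam₂| := abs_sub lam₁ lam₂
  have h4 : 1 / (2 * ε) ≤ 2 * Real.sqrt (lam₁ ^ 2 + lam₂ ^ 2) := by
    rw [← habs]; linarith
  have : 1 / (4 * ε) = (1 / (2 * ε)) / 2 := by ring
  rw [this]
  linarith
end

section
/- Let f : ℝⁿ → ℝ be a strongly convex quadratic f(x) = (1/2)xᵀQx + qᵀx with Q symmetric positive definite, and let c(x) = Ax − b be affine with A ∈ ℝ^{m×n}. Fix ω > 0, ρ > 0. Define the MALM map on λ ∈ ℝᵐ by: x(λ) = argmin_x [f(x) − λᵀc(x) + (1/(2(ω+ρ)))‖c(x) + ωλ‖²], followed by λ⁺ = λ − (c(x(λ)) + ωλ)/(ω+ρ). Then λ* ∈ ℝᵐ is a fixed point of this map if and only if x(λ*) is the unique minimizer of Φ_ω(x) = f(x) + (1/(2ω))‖Ax − b‖² and λ* = −(Ax(λ*) − b)/ω. -/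
/-!
A fixed point of the MALM map is exactly a multiplier `λ` with `c (x λ) + ω • λ = 0`.
Completing the square in `⟪λ, c x⟫` shows that `Φ x` equals `Ψ λ x` up to a constant plus
`((2ω)⁻¹ - (2(ω+ρ))⁻¹) ‖c x + ω • λ‖²`, a nonnegative term that vanishes at `x λ` when `λ` is a
fixed point. Hence `x λ` minimizes `Φ`, and strictly so because `Φ` is strictly convex.
-/

open RealInnerProductSpace Set

section

variable {E : Type*} [NormedAddCommGroup E] [InnerProductSpace ℝ E]

lemma LinearMap.inner_map_self_smul_add_smul (T : E →ₗ[ℝ] E) (x y : E) {a b : ℝ}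
    (hab : a + b = 1) :
    ⟪a • x + b • y, T (a • x + b • y)⟫ =
      a * ⟪x, T x⟫ + b * ⟪y, T y⟫ - a * b * ⟪x - y, T (x - y)⟫ := by
  simp only [map_add, map_sub, map_smul, inner_add_left, inner_add_right, inner_sub_left,
    inner_sub_right, real_inner_smul_left, real_inner_smul_right]
  obtain rfl : b = 1 - a := by linarith
  ring

lemma LinearMap.strictConvexOn_inner_map_self {T : E →ₗ[ℝ] E}
    (hpos : ∀ x, x ≠ 0 → 0 < ⟪x, T x⟫) :
    StrictConvexOn ℝ univ fun x => ⟪x, T x⟫ := by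
  refine ⟨convex_univ, fun x _ y _ hxy a b ha hb hab => ?_⟩
  simp only [smul_eq_mul]
  rw [T.inner_map_self_smul_add_smul x y hab]
  have := hpos (x - y) (sub_ne_zero.mpr hxy)
  linarith [mul_pos (mul_pos ha hb) this]

lemma StrictConvexOn.const_mul {s : Set E} {f : E → ℝ} {c : ℝ} (hc : 0 < c)
    (hf : StrictConvexOn ℝ s f) : StrictConvexOn ℝ s fun x => c * f x := by
  refine ⟨hf.1, fun x hx y hy hxy a b ha hb hab => ?_⟩
  have := mul_lt_mul_of_pos_left (hf.2 hx hy hxy ha hb hab) hc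
  simp only [smul_eq_mul] at this ⊢
  linarith

lemma convexOn_univ_norm_sub_sq {F : Type*} [NormedAddCommGroup F] [InnerProductSpace ℝ F]
    (L : E →ₗ[ℝ] F) (b : F) : ConvexOn ℝ univ fun x => ‖L x - b‖ ^ 2 := by
  have h : ConvexOn ℝ univ fun y : F => ‖y‖ ^ 2 :=
    convexOn_univ_norm.pow (fun _ _ => norm_nonneg _) 2
  exact h.comp_affineMap (L.toAffineMap - AffineMap.const ℝ E b)

end

lemma Matrix.PosDef.inner_toEuclideanLin_self_pos {ι : Type*} [Fintype ι] [DecidableEq ι]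
    {Q : Matrix ι ι ℝ} (hQ : Q.PosDef) {x : EuclideanSpace ℝ ι} (hx : x ≠ 0) :
    0 < ⟪x, Q.toEuclideanLin x⟫ := by
  have := hQ.dotProduct_mulVec_pos (x := WithLp.ofLp x) (by simpa using hx)
  rwa [EuclideanSpace.inner_eq_star_dotProduct, Matrix.ofLp_toLpLin, Matrix.toLin'_apply,
    dotProduct_comm]

lemma neg_real_inner_eq_norm_add_smul_sq {F : Type*} [NormedAddCommGroup F]
    [InnerProductSpace ℝ F] {ω : ℝ} (hω : ω ≠ 0) (u v : F) :
    -⟪v, u⟫ = (2 * ω)⁻¹ * ‖u‖ ^ 2 + ω / 2 * ‖v‖ ^ 2 - (2 * ω)⁻¹ * ‖u + ω • v‖ ^ 2 := by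
  rw [norm_add_sq_real, norm_smul, real_inner_smul_right, mul_pow, Real.norm_eq_abs, sq_abs,
    real_inner_comm]
  field_simp
  ring

lemma StrictConvexOn.lt_of_isMinOn {𝕜 E β : Type*} [Field 𝕜] [LinearOrder 𝕜]
    [IsStrictOrderedRing 𝕜] [AddCommMonoid β] [PartialOrder β] [IsOrderedAddMonoid β]
    [AddCommMonoid E] [SMul 𝕜 E] [Module 𝕜 β] [PosSMulMono 𝕜 β] {f : E → β} {s : Set E}
    {x y : E} (hf : StrictConvexOn 𝕜 s f) (hmin : IsMinOn f s x) (hx : x ∈ s) (hy : y ∈ s)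
    (hyx : y ≠ x) : f x < f y :=
  (hmin hy).lt_of_ne fun h => hyx <| hf.eq_of_isMinOn (fun _ hz => h ▸ hmin hz) hmin hy hx

theorem malm_quadratic_fixed_point_iff_general
    (n m : ℕ)
    (Q : Matrix (Fin n) (Fin n) ℝ) (hQpd : Q.PosDef)
    (q : EuclideanSpace ℝ (Fin n))
    (A : Matrix (Fin m) (Fin n) ℝ) (b : EuclideanSpace ℝ (Fin m))
    (ω ρ : ℝ) (hω : 0 < ω) (hρ : 0 < ρ)
    (f : EuclideanSpace ℝ (Fin n) → ℝ)
    (hf : ∀ x, f x = (1 / 2) * ⟪x, Matrix.toEuclideanLin Q x⟫ + ⟪q, x⟫)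
    (c : EuclideanSpace ℝ (Fin n) → EuclideanSpace ℝ (Fin m))
    (hc : ∀ x, c x = Matrix.toEuclideanLin A x - b)
    (Ψ : EuclideanSpace ℝ (Fin m) → EuclideanSpace ℝ (Fin n) → ℝ)
    (hΨ : ∀ lam x, Ψ lam x =
      f x - ⟪lam, c x⟫ + (1 / (2 * (ω + ρ))) * ‖c x + ω • lam‖ ^ 2)
    (Φ : EuclideanSpace ℝ (Fin n) → ℝ)
    (hΦ : ∀ x, Φ x = f x + (1 / (2 * ω)) * ‖c x‖ ^ 2)
    (xmap : EuclideanSpace ℝ (Fin m) → EuclideanSpace ℝ (Fin n))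
    (hxmap : ∀ lam x, Ψ lam (xmap lam) ≤ Ψ lam x)
    (lamstar : EuclideanSpace ℝ (Fin m)) :
    lamstar = lamstar - ((ω + ρ)⁻¹) • (c (xmap lamstar) + ω • lamstar) ↔
      ((∀ x, Φ (xmap lamstar) ≤ Φ x) ∧
       (∀ x, x ≠ xmap lamstar → Φ (xmap lamstar) < Φ x) ∧
       lamstar = -(ω⁻¹) • c (xmap lamstar)) := by
  set xs := xmap lamstar
  have hfix : lamstar = lamstar - ((ω + ρ)⁻¹) • (c xs + ω • lamstar) ↔
      c xs + ω • lamstar = 0 := by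
    rw [eq_comm, sub_eq_self, smul_eq_zero, or_iff_right (by positivity)]
  have hlam : c xs + ω • lamstar = 0 ↔ lamstar = -(ω⁻¹) • c xs := by
    rw [neg_smul, ← smul_neg, eq_inv_smul_iff₀ hω.ne', add_eq_zero_iff_eq_neg']
  have hconv : StrictConvexOn ℝ univ Φ := by
    refine (((LinearMap.strictConvexOn_inner_map_self fun x hx =>
      hQpd.inner_toEuclideanLin_self_pos hx).const_mul one_half_pos).add_convexOn
      ((innerₛₗ ℝ q).convexOn convex_univ)).add_convexOn
      ((convexOn_univ_norm_sub_sq (Matrix.toEuclideanLin A) b).smul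
        (by positivity : (0 : ℝ) ≤ 1 / (2 * ω))) |>.congr fun x _ => ?_
    simp [hΦ, hf, hc]
  rw [hfix]
  refine ⟨fun h0 => ?_, fun h => hlam.mpr h.2.2⟩
  have hΦΨ : ∀ x, Φ x = Ψ lamstar x - ω / 2 * ‖lamstar‖ ^ 2 +
      ((2 * ω)⁻¹ - (2 * (ω + ρ))⁻¹) * ‖c x + ω • lamstar‖ ^ 2 := fun x => by
    rw [hΦ, hΨ]
    linear_combination -neg_real_inner_eq_norm_add_smul_sq hω.ne' (c x) lamstar
  have hmin : IsMinOn Φ univ xs := fun x _ => by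
    have hκ : (2 * (ω + ρ))⁻¹ ≤ (2 * ω)⁻¹ := by gcongr; linarith
    show Φ xs ≤ Φ x
    rw [hΦΨ, hΦΨ, h0, norm_zero]
    nlinarith [hxmap lamstar x, sq_nonneg ‖c x + ω • lamstar‖]
  exact ⟨fun x => hmin (mem_univ x), fun x hx => hconv.lt_of_isMinOn hmin trivial trivial hx,
    hlam.mp h0⟩

theorem malm_quadratic_fixed_point_iff
    (n m : ℕ)
    (Q : Matrix (Fin n) (Fin n) ℝ) (hQsym : Q.IsSymm) (hQpd : Q.PosDef)
    (q : EuclideanSpace ℝ (Fin n))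
    (A : Matrix (Fin m) (Fin n) ℝ) (b : EuclideanSpace ℝ (Fin m))
    (ω ρ : ℝ) (hω : 0 < ω) (hρ : 0 < ρ)
    (f : EuclideanSpace ℝ (Fin n) → ℝ)
    (hf : ∀ x, f x = (1 / 2) * ⟪x, Matrix.toEuclideanLin Q x⟫ + ⟪q, x⟫)
    (c : EuclideanSpace ℝ (Fin n) → EuclideanSpace ℝ (Fin m))
    (hc : ∀ x, c x = Matrix.toEuclideanLin A x - b)
    (Ψ : EuclideanSpace ℝ (Fin m) → EuclideanSpace ℝ (Fin n) → ℝ)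
    (hΨ : ∀ lam x, Ψ lam x =
      f x - ⟪lam, c x⟫ + (1 / (2 * (ω + ρ))) * ‖c x + ω • lam‖ ^ 2)
    (Φ : EuclideanSpace ℝ (Fin n) → ℝ)
    (hΦ : ∀ x, Φ x = f x + (1 / (2 * ω)) * ‖c x‖ ^ 2)
    (xmap : EuclideanSpace ℝ (Fin m) → EuclideanSpace ℝ (Fin n))
    (hxmap : ∀ lam x, Ψ lam (xmap lam) ≤ Ψ lam x)
    (lamstar : EuclideanSpace ℝ (Fin m)) :
    lamstar = lamstar - ((ω + ρ)⁻¹) • (c (xmap lamstar) + ω • lamstar) ↔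
      ((∀ x, Φ (xmap lamstar) ≤ Φ x) ∧
       (∀ x, x ≠ xmap lamstar → Φ (xmap lamstar) < Φ x) ∧
       lamstar = -(ω⁻¹) • c (xmap lamstar)) :=
  malm_quadratic_fixed_point_iff_general n m Q hQpd q A b ω ρ hω hρ f hf c hc Ψ hΨ Φ hΦ xmap hxmap
    lamstar
end

section
/- Let f(x) = (1/2)xᵀQx + qᵀx with Q symmetric positive definite, c(x) = Ax − b, and ω > 0, ρ > 0. Then the MALM dual iteration λ_k = λ_{k−1} − (c(x_k) + ωλ_{k−1})/(ω+ρ), where x_k minimizes Ψ_k(x) = f(x) − λ_{k−1}ᵀc(x) + (1/(2(ω+ρ)))‖c(x) + ωλ_{k−1}‖², is an affine map λ_k = Mλ_{k−1} + v in λ whose matrix is M = (ρ·I − A(Q + AᵀA/(ω+ρ))⁻¹Aᵀ·(ρ/(ω+ρ)))/(ω+ρ); in particular ‖M‖₂ ≤ ρ/(ω+ρ) < 1, so the iteration converges linearly to its unique fixed point from any λ_0. -/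
/-!
Put `s = ω + ρ` and `B = Q + AᵀA / s`. The subproblem objective `Ψ λ` is the quadratic
`x ↦ ½⟪x, B x⟫ + ⟪r λ, x⟫ + const` with `r` affine in `λ`, so its minimiser solves `B x = -r λ`;
substituting into the dual step gives `λ ↦ M λ + v` with `M = (ρ / s) (I - A B⁻¹ Aᵀ / s)`.
The symmetric matrix `P = A B⁻¹ Aᵀ / s` satisfies `0 ≤ P ≤ I`: for `u = B⁻¹ Aᵀ x` and
`y = A u / s` one has `‖y‖² ≤ ⟪u, B u⟫ / s = ⟪x, y⟫ = ⟪x, P x⟫`, and `‖y‖² ≤ ⟪x, y⟫` forces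
`⟪x, y⟫ ≤ ‖x‖²`. Hence `‖M‖ ≤ ρ / s < 1`, and the contraction mapping theorem applies.
-/

open RealInnerProductSpace Filter Topology Matrix

section InnerProductSpace

variable {E : Type*} [NormedAddCommGroup E] [InnerProductSpace ℝ E]

theorem real_inner_le_norm_sq_of_norm_sq_le_inner {x y : E} (h : ‖y‖ ^ 2 ≤ ⟪x, y⟫) :
    ⟪x, y⟫ ≤ ‖x‖ ^ 2 := by
  nlinarith [norm_sub_sq_real x y, sq_nonneg ‖x - y‖]

theorem LinearMap.IsSymmetric.add_eq_zero_of_forall_le {T : E →ₗ[ℝ] E} (hT : T.IsSymmetric)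
    {r : E} {κ : ℝ} {φ : E → ℝ} (hφ : ∀ x, φ x = ⟪x, T x⟫ / 2 + ⟪r, x⟫ + κ) {x₀ : E}
    (hmin : ∀ x, φ x₀ ≤ φ x) : T x₀ + r = 0 := by
  set g := T x₀ + r
  have hexp (t : ℝ) : φ (x₀ + t • g) = φ x₀ + t * ⟪g, g⟫ + t ^ 2 / 2 * ⟪g, T g⟫ := by
    have hg : ⟪g, g⟫ = ⟪T x₀, g⟫ + ⟪r, g⟫ := inner_add_left _ _ _
    rw [hφ, hφ]
    simp only [map_add, map_smul, inner_add_left, inner_add_right, real_inner_smul_left,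
      real_inner_smul_right]
    linear_combination -t * hg - t / 2 * hT x₀ g + t / 2 * real_inner_comm (T x₀) g
  have hquad (t : ℝ) : 0 ≤ (⟪g, T g⟫ / 2) * (t * t) + ⟪g, g⟫ * t + 0 := by
    nlinarith [hmin (x₀ + t • g), hexp t]
  have hdiscr := discrim_le_zero hquad
  rw [discrim] at hdiscr
  have hgg : ⟪g, g⟫ ^ 2 = 0 := le_antisymm (by simpa using hdiscr) (sq_nonneg _)
  exact inner_self_eq_zero.mp (pow_eq_zero_iff two_ne_zero |>.mp hgg)

theorem ContinuousLinearMap.norm_le_of_abs_inner_le {T : E →L[ℝ] E}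
    (hT : (T : E →ₗ[ℝ] E).IsSymmetric) {C : ℝ} (hC : 0 ≤ C)
    (h : ∀ x, |⟪T x, x⟫| ≤ C * ‖x‖ ^ 2) : ‖T‖ ≤ C := by
  rw [T.norm_eq_iSup_rayleighQuotient hT]
  refine ciSup_le fun x => ?_
  rcases eq_or_ne x 0 with rfl | hx
  · simpa using hC
  · rw [rayleighQuotient, reApplyInnerSelf_apply, RCLike.re_to_real, abs_div,
      abs_of_nonneg (sq_nonneg ‖x‖), div_le_iff₀ (by positivity)]
    exact h x

theorem ContinuousLinearMap.existsUnique_fixedPoint_add_const_of_norm_lt_one [CompleteSpace E]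
    {T : E →L[ℝ] E} (hT : ‖T‖ < 1) (v : E) :
    ∃! l : E, l = T l + v ∧
      ∀ l₀ : E, Tendsto (fun k => (fun l => T l + v)^[k] l₀) atTop (𝓝 l) := by
  have hcon : ContractingWith ‖T‖₊ (fun l => T l + v) :=
    ⟨hT, LipschitzWith.of_dist_le_mul fun a b => by
      simpa [dist_eq_norm, ← map_sub] using T.le_opNorm (a - b)⟩
  exact ⟨hcon.fixedPoint _, ⟨hcon.fixedPoint_isFixedPt.symm, hcon.tendsto_iterate_fixedPoint⟩,
    fun l hl => hcon.fixedPoint_unique hl.1.symm⟩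

end InnerProductSpace

namespace Matrix

variable {m n : Type*} [Fintype m] [Fintype n]

theorem PosDef.add_smul_transpose_mul_self {Q : Matrix n n ℝ} (hQ : Q.PosDef) (A : Matrix m n ℝ)
    {c : ℝ} (hc : 0 ≤ c) : (Q + c • (Aᵀ * A)).PosDef :=
  hQ.add_posSemidef ((conjTranspose_eq_transpose_of_trivial A ▸
    posSemidef_conjTranspose_mul_self A).smul hc)

variable [DecidableEq m] [DecidableEq n]

theorem inner_toEuclideanLin_transpose (A : Matrix m n ℝ) (x : EuclideanSpace ℝ m)
    (y : EuclideanSpace ℝ n) : ⟪toEuclideanLin Aᵀ x, y⟫ = ⟪x, toEuclideanLin A y⟫ := by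
  rw [← conjTranspose_eq_transpose_of_trivial, toEuclideanLin_conjTranspose_eq_adjoint,
    LinearMap.adjoint_inner_left]

theorem toEuclideanLin_inv_apply_toEuclideanLin {B : Matrix n n ℝ} (hB : IsUnit B)
    (x : EuclideanSpace ℝ n) : toEuclideanLin B⁻¹ (toEuclideanLin B x) = x := by
  rw [← LinearMap.comp_apply, ← toLpLin_mul_same,
    nonsing_inv_mul B ((isUnit_iff_isUnit_det B).mp hB), toLpLin_one, LinearMap.id_apply]

theorem toEuclideanLin_apply_toEuclideanLin_inv {B : Matrix n n ℝ} (hB : IsUnit B)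
    (x : EuclideanSpace ℝ n) : toEuclideanLin B (toEuclideanLin B⁻¹ x) = x := by
  rw [← LinearMap.comp_apply, ← toLpLin_mul_same,
    mul_nonsing_inv B ((isUnit_iff_isUnit_det B).mp hB), toLpLin_one, LinearMap.id_apply]

theorem inner_toEuclideanLin_add_smul_transpose_mul_self (Q : Matrix n n ℝ) (A : Matrix m n ℝ)
    (c : ℝ) (x : EuclideanSpace ℝ n) :
    ⟪x, toEuclideanLin (Q + c • (Aᵀ * A)) x⟫ =
      ⟪x, toEuclideanLin Q x⟫ + c * ‖toEuclideanLin A x‖ ^ 2 := by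
  rw [map_add, map_smul, toLpLin_mul_same, LinearMap.add_apply, LinearMap.smul_apply,
    LinearMap.comp_apply, inner_add_right, real_inner_smul_right,
    ← inner_toEuclideanLin_transpose Aᵀ, transpose_transpose, real_inner_self_eq_norm_sq]

theorem smul_inner_mul_inv_mul_transpose_le {Q : Matrix n n ℝ} (hQ : Q.PosSemidef)
    (A : Matrix m n ℝ) {c : ℝ} (hc : 0 ≤ c) (hB : IsUnit (Q + c • (Aᵀ * A)))
    (x : EuclideanSpace ℝ m) :
    c * ⟪x, toEuclideanLin (A * (Q + c • (Aᵀ * A))⁻¹ * Aᵀ) x⟫ ≤ ‖x‖ ^ 2 := by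
  set B := Q + c • (Aᵀ * A)
  set u := toEuclideanLin B⁻¹ (toEuclideanLin Aᵀ x)
  have hBu : toEuclideanLin B u = toEuclideanLin Aᵀ x :=
    toEuclideanLin_apply_toEuclideanLin_inv hB _
  have hPx : toEuclideanLin (A * B⁻¹ * Aᵀ) x = toEuclideanLin A u := by
    simp only [toLpLin_mul_same, LinearMap.comp_apply, u]
  have hQu : 0 ≤ ⟪u, toEuclideanLin Q u⟫ :=
    (isPositive_toEuclideanLin_iff.mpr hQ).inner_nonneg_right u
  have hkey : ‖c • toEuclideanLin A u‖ ^ 2 ≤ ⟪x, c • toEuclideanLin A u⟫ := by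
    have hBuu := inner_toEuclideanLin_add_smul_transpose_mul_self Q A c u
    rw [hBu, real_inner_comm, inner_toEuclideanLin_transpose] at hBuu
    rw [norm_smul, real_inner_smul_right, mul_pow, Real.norm_eq_abs, sq_abs]
    nlinarith [mul_nonneg hc hQu]
  rw [hPx, ← real_inner_smul_right]
  exact real_inner_le_norm_sq_of_norm_sq_le_inner hkey

theorem norm_toEuclideanCLM_one_sub_smul_mul_inv_mul_transpose_le_one {Q : Matrix n n ℝ}
    (hQ : Q.PosDef) (A : Matrix m n ℝ) {c : ℝ} (hc : 0 ≤ c) :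
    ‖(toEuclideanCLM (𝕜 := ℝ) (1 - c • (A * (Q + c • (Aᵀ * A))⁻¹ * Aᵀ)) :
      EuclideanSpace ℝ m →L[ℝ] EuclideanSpace ℝ m)‖ ≤ 1 := by
  set B := Q + c • (Aᵀ * A)
  have hB : B.PosDef := hQ.add_smul_transpose_mul_self A hc
  have hP : (A * B⁻¹ * Aᵀ).PosSemidef := by
    simpa only [conjTranspose_eq_transpose_of_trivial] using
      hB.inv.posSemidef.mul_mul_conjTranspose_same A
  refine ContinuousLinearMap.norm_le_of_abs_inner_le ?_ zero_le_one fun x => ?_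
  · rw [coe_toEuclideanCLM_eq_toEuclideanLin, isSymmetric_toEuclideanLin_iff]
    exact isHermitian_one.sub (hP.isHermitian.smul (IsSelfAdjoint.all c))
  · have hPx : toEuclideanCLM (𝕜 := ℝ) (A * B⁻¹ * Aᵀ) x = toEuclideanLin (A * B⁻¹ * Aᵀ) x :=
      rfl
    have hP₀ := (isPositive_toEuclideanLin_iff.mpr hP).inner_nonneg_right x
    have hP₁ := smul_inner_mul_inv_mul_transpose_le hQ.posSemidef A hc hB.isUnit x
    rw [map_sub, map_one, map_smul, _root_.sub_apply, one_apply_eq_self, _root_.smul_apply, hPx,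
      inner_sub_left, real_inner_smul_left, real_inner_self_eq_norm_sq, real_inner_comm, abs_le]
    constructor <;> nlinarith [mul_nonneg hc hP₀]

end Matrix

section MALM

variable {m n : Type*} [Fintype m] [Fintype n] [DecidableEq m] [DecidableEq n]

theorem malm_subproblem_eq_quadratic (Q : Matrix n n ℝ) (q : EuclideanSpace ℝ n)
    (A : Matrix m n ℝ) (b : EuclideanSpace ℝ m) (ω σ : ℝ) (lam : EuclideanSpace ℝ m)
    (x : EuclideanSpace ℝ n) :
    1 / 2 * ⟪x, toEuclideanLin Q x⟫ + ⟪q, x⟫ - ⟪lam, toEuclideanLin A x - b⟫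
        + 1 / (2 * σ) * ‖toEuclideanLin A x - b + ω • lam‖ ^ 2 =
      ⟪x, toEuclideanLin (Q + σ⁻¹ • (Aᵀ * A)) x⟫ / 2
        + ⟪q - toEuclideanLin Aᵀ lam + σ⁻¹ • toEuclideanLin Aᵀ (ω • lam - b), x⟫
        + (⟪lam, b⟫ + ‖ω • lam - b‖ ^ 2 / (2 * σ)) := by
  have hnorm : ‖toEuclideanLin A x - b + ω • lam‖ ^ 2 = ‖toEuclideanLin A x‖ ^ 2
      + 2 * ⟪toEuclideanLin Aᵀ (ω • lam - b), x⟫ + ‖ω • lam - b‖ ^ 2 := by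
    rw [show toEuclideanLin A x - b + ω • lam = toEuclideanLin A x + (ω • lam - b) by abel,
      norm_add_sq_real, real_inner_comm, inner_toEuclideanLin_transpose]
  rw [hnorm, inner_sub_right, ← inner_toEuclideanLin_transpose A lam x, inner_add_left,
    inner_sub_left, real_inner_smul_left, inner_toEuclideanLin_add_smul_transpose_mul_self]
  ring

theorem malm_exists_dual_update_eq_affine {B : Matrix n n ℝ} (hB : IsUnit B) (A : Matrix m n ℝ)
    (q : EuclideanSpace ℝ n) (b : EuclideanSpace ℝ m) {ω ρ : ℝ} (hs : ω + ρ ≠ 0) :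
    ∃ v : EuclideanSpace ℝ m, ∀ (lam : EuclideanSpace ℝ m) (xk : EuclideanSpace ℝ n),
      toEuclideanLin B xk + (q - toEuclideanLin Aᵀ lam
          + (ω + ρ)⁻¹ • toEuclideanLin Aᵀ (ω • lam - b)) = 0 →
        lam - (ω + ρ)⁻¹ • (toEuclideanLin A xk - b + ω • lam) =
          toEuclideanCLM (𝕜 := ℝ) ((ω + ρ)⁻¹ • (ρ • (1 : Matrix m m ℝ) -
            (ρ / (ω + ρ)) • (A * B⁻¹ * Aᵀ))) lam + v := by
  refine ⟨(ω + ρ)⁻¹ • (b - toEuclideanLin A (toEuclideanLin B⁻¹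
    ((ω + ρ)⁻¹ • toEuclideanLin Aᵀ b - q))), fun lam xk hgrad => ?_⟩
  have hxk : xk = toEuclideanLin B⁻¹
      ((ρ / (ω + ρ)) • toEuclideanLin Aᵀ lam + ((ω + ρ)⁻¹ • toEuclideanLin Aᵀ b - q)) := by
    rw [← toEuclideanLin_inv_apply_toEuclideanLin hB xk, eq_neg_of_add_eq_zero_left hgrad]
    congr 1
    simp only [map_sub, map_smul]
    match_scalars <;> grind
  have hP : toEuclideanCLM (𝕜 := ℝ) (A * B⁻¹ * Aᵀ) lam =
      toEuclideanLin A (toEuclideanLin B⁻¹ (toEuclideanLin Aᵀ lam)) := by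
    rw [← ContinuousLinearMap.coe_coe, coe_toEuclideanCLM_eq_toEuclideanLin, toLpLin_mul_same,
      toLpLin_mul_same, LinearMap.comp_apply, LinearMap.comp_apply]
  rw [hxk]
  simp only [map_smul, map_sub, map_one, map_add, _root_.smul_apply, _root_.sub_apply,
    one_apply_eq_self, hP]
  match_scalars <;> grind

end MALM

theorem malm_quadratic_linear_convergence_general
    (n m : ℕ)
    (Q : Matrix (Fin n) (Fin n) ℝ) (hQpd : Q.PosDef)
    (q : EuclideanSpace ℝ (Fin n))
    (A : Matrix (Fin m) (Fin n) ℝ) (b : EuclideanSpace ℝ (Fin m))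
    (ω ρ : ℝ) (hω : 0 < ω) (hρ : 0 < ρ)
    (f : EuclideanSpace ℝ (Fin n) → ℝ)
    (hf : ∀ x, f x = (1 / 2) * ⟪x, Matrix.toEuclideanLin Q x⟫ + ⟪q, x⟫)
    (c : EuclideanSpace ℝ (Fin n) → EuclideanSpace ℝ (Fin m))
    (hc : ∀ x, c x = Matrix.toEuclideanLin A x - b)
    (Ψ : EuclideanSpace ℝ (Fin m) → EuclideanSpace ℝ (Fin n) → ℝ)
    (hΨ : ∀ lam x, Ψ lam x =
      f x - ⟪lam, c x⟫ + (1 / (2 * (ω + ρ))) * ‖c x + ω • lam‖ ^ 2)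
    (M : Matrix (Fin m) (Fin m) ℝ)
    (hM : M = ((ω + ρ)⁻¹) •
      (ρ • (1 : Matrix (Fin m) (Fin m) ℝ) -
        (ρ / (ω + ρ)) • (A * (Q + ((ω + ρ)⁻¹) • (Aᵀ * A))⁻¹ * Aᵀ))) :
    ∃ v : EuclideanSpace ℝ (Fin m),
      (∀ (lam : EuclideanSpace ℝ (Fin m)) (xk : EuclideanSpace ℝ (Fin n)),
        (∀ x, Ψ lam xk ≤ Ψ lam x) →
          lam - ((ω + ρ)⁻¹) • (c xk + ω • lam) = Matrix.toEuclideanCLM (𝕜 := ℝ) M lam + v) ∧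
      ‖(Matrix.toEuclideanCLM (𝕜 := ℝ) M :
          EuclideanSpace ℝ (Fin m) →L[ℝ] EuclideanSpace ℝ (Fin m))‖ ≤ ρ / (ω + ρ) ∧
      ρ / (ω + ρ) < 1 ∧
      ∃! lamstar : EuclideanSpace ℝ (Fin m),
        lamstar = Matrix.toEuclideanCLM (𝕜 := ℝ) M lamstar + v ∧
        ∀ lam0 : EuclideanSpace ℝ (Fin m),
          Tendsto (fun k => (fun l => Matrix.toEuclideanCLM (𝕜 := ℝ) M l + v)^[k] lam0)
            atTop (𝓝 lamstar) := by
  have hs : 0 < ω + ρ := add_pos hω hρ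
  have hB := hQpd.add_smul_transpose_mul_self A (inv_nonneg.mpr hs.le)
  obtain ⟨v, hv⟩ := malm_exists_dual_update_eq_affine hB.isUnit A q b hs.ne'
  have hnorm : ‖(toEuclideanCLM (𝕜 := ℝ) M :
      EuclideanSpace ℝ (Fin m) →L[ℝ] EuclideanSpace ℝ (Fin m))‖ ≤ ρ / (ω + ρ) := by
    have hM' : M = (ρ / (ω + ρ)) •
        (1 - (ω + ρ)⁻¹ • (A * (Q + (ω + ρ)⁻¹ • (Aᵀ * A))⁻¹ * Aᵀ)) := by
      rw [hM]; module
    rw [hM', map_smul, norm_smul, Real.norm_of_nonneg (by positivity)]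
    exact mul_le_of_le_one_right (by positivity)
      (norm_toEuclideanCLM_one_sub_smul_mul_inv_mul_transpose_le_one hQpd A (inv_nonneg.mpr hs.le))
  have hlt : ρ / (ω + ρ) < 1 := (div_lt_one hs).mpr (lt_add_of_pos_left ρ hω)
  refine ⟨v, fun lam xk hmin => ?_, hnorm, hlt,
    ContinuousLinearMap.existsUnique_fixedPoint_add_const_of_norm_lt_one (hnorm.trans_lt hlt) v⟩
  rw [hc, hM]
  exact hv lam xk ((isSymmetric_toEuclideanLin_iff.mpr hB.isHermitian).add_eq_zero_of_forall_le
    (fun x => by rw [hΨ, hf, hc]; exact malm_subproblem_eq_quadratic Q q A b ω (ω + ρ) lam x) hmin)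

theorem malm_quadratic_linear_convergence
    (n m : ℕ)
    (Q : Matrix (Fin n) (Fin n) ℝ) (hQsym : Q.IsSymm) (hQpd : Q.PosDef)
    (q : EuclideanSpace ℝ (Fin n))
    (A : Matrix (Fin m) (Fin n) ℝ) (b : EuclideanSpace ℝ (Fin m))
    (ω ρ : ℝ) (hω : 0 < ω) (hρ : 0 < ρ)
    (f : EuclideanSpace ℝ (Fin n) → ℝ)
    (hf : ∀ x, f x = (1 / 2) * ⟪x, Matrix.toEuclideanLin Q x⟫ + ⟪q, x⟫)
    (c : EuclideanSpace ℝ (Fin n) → EuclideanSpace ℝ (Fin m))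
    (hc : ∀ x, c x = Matrix.toEuclideanLin A x - b)
    (Ψ : EuclideanSpace ℝ (Fin m) → EuclideanSpace ℝ (Fin n) → ℝ)
    (hΨ : ∀ lam x, Ψ lam x =
      f x - ⟪lam, c x⟫ + (1 / (2 * (ω + ρ))) * ‖c x + ω • lam‖ ^ 2)
    (M : Matrix (Fin m) (Fin m) ℝ)
    (hM : M = ((ω + ρ)⁻¹) •
      (ρ • (1 : Matrix (Fin m) (Fin m) ℝ) -
        (ρ / (ω + ρ)) • (A * (Q + ((ω + ρ)⁻¹) • (Aᵀ * A))⁻¹ * Aᵀ))) :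
    ∃ v : EuclideanSpace ℝ (Fin m),
      (∀ (lam : EuclideanSpace ℝ (Fin m)) (xk : EuclideanSpace ℝ (Fin n)),
        (∀ x, Ψ lam xk ≤ Ψ lam x) →
          lam - ((ω + ρ)⁻¹) • (c xk + ω • lam) = Matrix.toEuclideanCLM (𝕜 := ℝ) M lam + v) ∧
      ‖(Matrix.toEuclideanCLM (𝕜 := ℝ) M :
          EuclideanSpace ℝ (Fin m) →L[ℝ] EuclideanSpace ℝ (Fin m))‖ ≤ ρ / (ω + ρ) ∧
      ρ / (ω + ρ) < 1 ∧
      ∃! lamstar : EuclideanSpace ℝ (Fin m),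
        lamstar = Matrix.toEuclideanCLM (𝕜 := ℝ) M lamstar + v ∧
        ∀ lam0 : EuclideanSpace ℝ (Fin m),
          Tendsto (fun k => (fun l => Matrix.toEuclideanCLM (𝕜 := ℝ) M l + v)^[k] lam0)
            atTop (𝓝 lamstar) :=
  malm_quadratic_linear_convergence_general n m Q hQpd q A b ω ρ hω hρ f hf c hc Ψ hΨ M hM
end
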